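/- Let (X, 𝔄, d) be a C*-algebra valued metric space over a unital C*-algebra 𝔄, and let T : X → X be a C*-algebra valued Ćirić-type1 contractive mapping. Then T has at most one fixed point: if Tz = z and Tw = w then z = w. -/
import Mathlib


open Filter Topology Function

/-- A C*-algebra valued metric space: `d : X × X → A` into a unital C*-algebra `A`. -/
structure CStarMetric (X : Type*) (A : Type*) [NormedRing A] [StarRing A] [PartialOrder A] where
  d : X → X → A
  nonneg : ∀ x y, 0 ≤ d x y
  eq_zero_iff : ∀ x y, d x y = 0 ↔ x = y
  symm : ∀ x y, d x y = d y x
  triangle : ∀ x y z, d x y ≤ d x z + d z y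

variable {X A : Type*} [NormedRing A] [StarRing A] [CStarRing A] [PartialOrder A]
  [StarOrderedRing A] [CompleteSpace A] [NormedAlgebra ℂ A]

/-- A sequence converges to `x` when `‖d (s n) x‖ → 0`. -/
def CStarConverges (M : CStarMetric X A) (s : ℕ → X) (x : X) : Prop :=
  Tendsto (fun n => ‖M.d (s n) x‖) atTop (𝓝 (0 : ℝ))

/-- Cauchy sequence: `‖d (s n) (s m)‖ → 0` as `n, m → ∞`. -/
def CStarCauchy (M : CStarMetric X A) (s : ℕ → X) : Prop :=
  ∀ ε : ℝ, 0 < ε → ∃ N : ℕ, ∀ n m : ℕ, N ≤ n → N ≤ m → ‖M.d (s n) (s m)‖ < ε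

/-- Completeness: every Cauchy sequence converges. -/
def CStarComplete (M : CStarMetric X A) : Prop :=
  ∀ s : ℕ → X, CStarCauchy M s → ∃ x, CStarConverges M s x

/-- Orbital continuity of `T` at `u`. -/
def OrbContAt (M : CStarMetric X A) (T : X → X) (u : X) : Prop :=
  ∀ (x : X) (k : ℕ → ℕ), StrictMono k →
    Tendsto (fun i => ‖M.d (T^[k i] x) u‖) atTop (𝓝 (0 : ℝ)) →
    Tendsto (fun i => ‖M.d (T^[k i + 1] x) (T u)‖) atTop (𝓝 (0 : ℝ))

/-- Orbital continuity of `T` on `X`. -/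
def OrbCont (M : CStarMetric X A) (T : X → X) : Prop :=
  ∀ u, OrbContAt M T u

/-- Ćirić-type1 contractive mapping. -/
def CiricType1 (M : CStarMetric X A) (T : X → X) : Prop :=
  ∃ q δ : X → X → A, (∀ x y, ‖q x y‖ < 1) ∧ (∀ x y, 0 ≤ δ x y) ∧
    ∀ x y : X, ∀ n : ℕ, 1 ≤ n →
      M.d (T^[n] x) (T^[n] y) ≤ star (q x y) ^ n * δ x y * q x y ^ n

/-- Ćirić-type2 contractive mapping: `q` takes values in the central positive elements. -/
def CiricType2 (M : CStarMetric X A) (T : X → X) : Prop :=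
  ∃ q δ : X → X → A,
    (∀ x y, 0 ≤ q x y ∧ (∀ b : A, q x y * b = b * q x y) ∧ ‖q x y‖ < 1) ∧
    (∀ x y, 0 ≤ δ x y) ∧
    ∀ x y : X, ∀ n : ℕ, 1 ≤ n → M.d (T^[n] x) (T^[n] y) ≤ q x y ^ n * δ x y

open Complex in
lemma starModule_of_cstarOrdered {A : Type*} [NormedRing A] [StarRing A] [CStarRing A]
    [PartialOrder A] [StarOrderedRing A] [NormedAlgebra ℂ A] :
    StarModule ℂ A := by
  have hreal : ∀ (r : ℝ) (a : A), star (r • a) = r • star a := fun r a =>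
    map_real_smul (starAddEquiv : A ≃+ A) continuous_star r a
  obtain ⟨u, hu⟩ : ∃ x : A, x = (I : ℂ) • 1 := ⟨_, rfl⟩
  obtain ⟨j, hj⟩ : ∃ x : A, x = star u := ⟨_, rfl⟩
  have hcomm : ∀ x : A, u * x = x * u := by
    intro x; rw [hu, smul_mul_assoc, one_mul, mul_smul_comm, mul_one]
  have hjc : ∀ x : A, j * x = x * j := by
    intro x
    rw [hj]
    calc star u * x = star (star x * u) := by rw [star_mul, star_star]
      _ = star (u * star x) := by rw [hcomm]
      _ = x * star u := by rw [star_mul, star_star]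
  have huu : u * u = -1 := by
    rw [hu, smul_mul_assoc, one_mul, smul_smul, I_mul_I, neg_smul, one_smul]
  have hjj : j * j = -1 := by rw [hj, ← star_mul, huu, star_neg, star_one]
  have hvsa : star (u * j) = u * j := by rw [hj, star_mul, star_star]
  have hvv : (u * j) * (u * j) = 1 := by
    calc u * j * (u * j) = u * (j * u) * j := by noncomm_ring
      _ = u * (u * j) * j := by rw [hjc u]
      _ = u * u * (j * j) := by noncomm_ring
      _ = 1 := by rw [huu, hjj, neg_mul_neg, one_mul]
  obtain ⟨e, he⟩ : ∃ x : A, x = (2⁻¹ : ℝ) • (1 - u * j) := ⟨_, rfl⟩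
  have hesa : star e = e := by rw [he, hreal, star_sub, star_one, hvsa]
  have hee : e * e = e := by
    rw [he, smul_mul_smul_comm]
    have hx : ((1 : A) - u * j) * (1 - u * j) = (2 : ℝ) • (1 - u * j) := by
      rw [sub_mul, mul_sub, mul_sub, one_mul, mul_one, hvv, two_smul, one_mul]
      abel
    rw [hx, smul_smul]
    norm_num
  have hpos : (0 : A) ≤ e := by
    have h := star_mul_self_nonneg e
    rwa [hesa, hee] at h
  have hej : e * j = u * e := by
    rw [he, smul_mul_assoc, mul_smul_comm]
    congr 1
    rw [sub_mul, one_mul, mul_assoc, hjj, mul_sub, mul_one, ← mul_assoc, huu]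
    noncomm_ring
  have hxsa : star (u * e) = u * e := by
    rw [star_mul, hesa, ← hj, hej]
  have hx2 : (u * e) * (u * e) = -e := by
    calc u * e * (u * e) = u * (e * u) * e := by noncomm_ring
      _ = u * (u * e) * e := by rw [← hcomm e]
      _ = u * u * (e * e) := by noncomm_ring
      _ = -e := by rw [huu, hee, neg_one_mul]
  have hneg : (0 : A) ≤ -e := by
    have h := star_mul_self_nonneg (u * e)
    rwa [hxsa, hx2] at h
  have he0 : e = 0 := le_antisymm (neg_nonneg.mp hneg) hpos
  have huj1 : u * j = 1 := by
    rw [he] at he0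
    rcases smul_eq_zero.mp he0 with h | h
    · norm_num at h
    · exact (sub_eq_zero.mp h).symm
  have hjneg : j = -u := by
    have h : u * (u * j) = u * 1 := by rw [huj1]
    rw [← mul_assoc, huu, neg_one_mul, mul_one] at h
    exact neg_eq_iff_eq_neg.mp h
  have key : star ((I : ℂ) • (1 : A)) = -((I : ℂ) • (1 : A)) := by
    rw [← hu, ← hj, hjneg]
  constructor
  intro c a
  have hdecomp : ∀ z : ℂ, z • (1 : A) = (z.re : ℝ) • 1 + (z.im : ℝ) • ((I : ℂ) • 1) := by
    intro z
    conv_lhs => rw [show z = (z.re : ℂ) + (z.im : ℂ) * I from (Complex.re_add_im z).symm]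
    rw [add_smul, mul_smul]
    norm_cast
  have hstar1 : star (c • (1 : A)) = (starRingEnd ℂ c) • 1 := by
    rw [hdecomp c, star_add, hreal, hreal, star_one, key, hdecomp (starRingEnd ℂ c)]
    rw [Complex.conj_re, Complex.conj_im]
    rw [smul_neg, neg_smul]
  calc star (c • a) = star ((c • (1 : A)) * a) := by rw [smul_mul_assoc, one_mul]
    _ = star a * star (c • (1 : A)) := star_mul _ _
    _ = star a * ((starRingEnd ℂ c) • 1) := by rw [hstar1]
    _ = (starRingEnd ℂ c) • star a := by rw [mul_smul_comm, mul_one]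

/-- A Ciric-type1 contractive mapping has at most one fixed point. -/
theorem ciric1_fixedPoint_unique
    (M : CStarMetric X A) (T : X → X) (hT : CiricType1 M T)
    (z w : X) (hz : T z = z) (hw : T w = w) : z = w := by
  letI : StarModule ℂ A := starModule_of_cstarOrdered
  letI : CStarAlgebra A := {}
  obtain ⟨q, δ, hq, hδ, hc⟩ := hT
  have key : ∀ n : ℕ, 1 ≤ n → ‖M.d z w‖ ≤ ‖q z w‖ ^ n * ‖δ z w‖ * ‖q z w‖ ^ n := by
    intro n hn
    have h1 := hc z w n hn
    rw [Function.iterate_fixed hz, Function.iterate_fixed hw] at h1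
    calc ‖M.d z w‖ ≤ ‖star (q z w) ^ n * δ z w * q z w ^ n‖ :=
          CStarAlgebra.norm_le_norm_of_nonneg_of_le (M.nonneg z w) h1
      _ ≤ ‖star (q z w) ^ n‖ * ‖δ z w‖ * ‖q z w ^ n‖ := by
          calc ‖star (q z w) ^ n * δ z w * q z w ^ n‖
              ≤ ‖star (q z w) ^ n * δ z w‖ * ‖q z w ^ n‖ := norm_mul_le _ _
            _ ≤ ‖star (q z w) ^ n‖ * ‖δ z w‖ * ‖q z w ^ n‖ := by
                gcongr; exact norm_mul_le _ _
      _ ≤ ‖q z w‖ ^ n * ‖δ z w‖ * ‖q z w‖ ^ n := by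
          gcongr <;> simpa [← star_pow, norm_star] using norm_pow_le' _ (by omega)
  have hlim : Tendsto (fun n : ℕ => ‖q z w‖ ^ (n+1) * ‖δ z w‖ * ‖q z w‖ ^ (n+1)) atTop (𝓝 0) := by
    have hq1 : |‖q z w‖| < 1 := by
      rw [abs_of_nonneg (norm_nonneg _)]; exact hq z w
    have h := tendsto_pow_atTop_nhds_zero_of_abs_lt_one hq1
    have h' := (h.comp (tendsto_add_atTop_nat 1))
    simpa using (h'.mul_const ‖δ z w‖).mul h'
  have hle : ‖M.d z w‖ ≤ 0 :=
    ge_of_tendsto' hlim fun n => key (n+1) (Nat.le_add_left 1 n)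
  have : M.d z w = 0 := by
    have := le_antisymm hle (norm_nonneg _)
    exact norm_eq_zero.mp this
  exact (M.eq_zero_iff z w).mp this
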